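/- arXiv:0707.4124 — 2 statements merged into one kernel-verified Lean document; each statement's English description precedes it below -/
import Mathlib

section
/- The conditional law of σ_0 given the event {σ_0 ≤ τ_0} (i.e. given that the busy period consists of a single customer) equals Exp(λ+μ), and the conditional law of σ_0 given the event {σ_0 > τ_0} (i.e. given that the busy period contains more than one customer) equals Exp(λ+μ) ⋆ Exp(μ). -/
/-!
Conditioning on `σ₀ ≤ τ₀` weights the density `μ e^{-μx}` of `σ₀` by `P(τ₀ ≥ x) = e^{-λx}`,
which tilts it into `μ/(λ+μ)` times the density of `Exp(λ+μ)`. The law of `σ₀` is the mixture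
of its two conditional laws with weights `μ/(λ+μ)` and `λ/(λ+μ)`, so the second conditional
law is whatever completes `Exp(λ+μ)` to `Exp(μ)` in this mixture; a direct computation of the
convolution density shows that `Exp(λ+μ) ⋆ Exp(μ)` does.
-/

open MeasureTheory ProbabilityTheory
open Real Set
open scoped ENNReal

lemma ProbabilityTheory.IndepFun.measure_inter_preimage_le {Ω : Type*} [MeasurableSpace Ω]
    {P : Measure Ω} [IsFiniteMeasure P] {X Y : Ω → ℝ} (hX : Measurable X) (hY : Measurable Y)
    (hXY : IndepFun X Y P) {s : Set ℝ} (hs : MeasurableSet s) :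
    P ({ω | X ω ≤ Y ω} ∩ X ⁻¹' s) = ∫⁻ x in s, P.map Y (Ici x) ∂P.map X := by
  have hS : MeasurableSet {p : ℝ × ℝ | p.1 ≤ p.2 ∧ p.1 ∈ s} :=
    (measurableSet_le measurable_fst measurable_snd).inter (measurable_fst hs)
  calc P ({ω | X ω ≤ Y ω} ∩ X ⁻¹' s)
      = P.map (fun ω => (X ω, Y ω)) {p : ℝ × ℝ | p.1 ≤ p.2 ∧ p.1 ∈ s} :=
        (Measure.map_apply (hX.prodMk hY) hS).symm
    _ = ((P.map X).prod (P.map Y)) {p : ℝ × ℝ | p.1 ≤ p.2 ∧ p.1 ∈ s} := by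
        rw [(indepFun_iff_map_prod_eq_prod_map_map hX.aemeasurable hY.aemeasurable).1 hXY]
    _ = ∫⁻ x, s.indicator (fun x => P.map Y (Ici x)) x ∂P.map X := by
        rw [Measure.prod_apply hS]
        congr 1; funext x
        by_cases hx : x ∈ s
        · simp only [indicator_of_mem hx]
          congr 1; ext y; simp [hx]
        · simp [hx]
    _ = ∫⁻ x in s, P.map Y (Ici x) ∂P.map X := lintegral_indicator hs _

section Conditioning

variable {Ω α : Type*} [MeasurableSpace Ω] [MeasurableSpace α] {P : Measure Ω} {A : Set Ω}
  {X : Ω → α}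

lemma cond_map_eq_of_measure_inter_preimage {ν : Measure α} [IsProbabilityMeasure ν]
    {c : ℝ≥0∞} (hA : MeasurableSet A) (hX : Measurable X) (hc₀ : c ≠ 0) (hc : c ≠ ∞)
    (h : ∀ s, MeasurableSet s → P (A ∩ X ⁻¹' s) = c * ν s) :
    (P[|A]).map X = ν := by
  have hPA : P A = c := by simpa using h univ MeasurableSet.univ
  ext s hs
  rw [Measure.map_apply hX hs, cond_apply hA, hPA, h s hs, ← mul_assoc,
    ENNReal.inv_mul_cancel hc₀ hc, one_mul]

lemma measure_compl_inter_preimage_of_map_eq_add {ν₁ ν₂ : Measure α} [IsFiniteMeasure ν₁]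
    (hA : MeasurableSet A) (hX : Measurable X) (hmap : P.map X = ν₁ + ν₂)
    (h : ∀ s, MeasurableSet s → P (A ∩ X ⁻¹' s) = ν₁ s) {s : Set α} (hs : MeasurableSet s) :
    P (Aᶜ ∩ X ⁻¹' s) = ν₂ s := by
  have hsplit := measure_inter_add_sdiff (μ := P) (X ⁻¹' s) hA
  rw [inter_comm, h s hs, sdiff_eq, inter_comm, ← Measure.map_apply hX hs, hmap,
    Measure.add_apply] at hsplit
  exact (ENNReal.add_right_inj (measure_ne_top ν₁ s)).1 hsplit

end Conditioning

lemma expMeasure_eq_withDensity (r : ℝ) : expMeasure r = volume.withDensity (exponentialPDF r) :=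
  rfl

@[fun_prop]
lemma measurable_exponentialPDF (r : ℝ) : Measurable (exponentialPDF r) :=
  (measurable_exponentialPDFReal r).ennreal_ofReal

lemma one_sub_exp_neg_mul_nonneg {r x : ℝ} (hr : 0 ≤ r) (hx : 0 ≤ x) :
    0 ≤ 1 - exp (-(r * x)) :=
  sub_nonneg.2 (exp_le_one_iff.2 (neg_nonpos.2 (mul_nonneg hr hx)))

lemma expMeasure_Ici {r : ℝ} (hr : 0 < r) {u : ℝ} (hu : 0 ≤ u) :
    expMeasure r (Ici u) = ENNReal.ofReal (exp (-(r * u))) := by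
  have := isProbabilityMeasure_expMeasure hr
  have hIio : expMeasure r (Iio u) = expMeasure r (Iic u) :=
    measure_congr ((withDensity_absolutelyContinuous _ _).ae_eq Iio_ae_eq_Iic)
  rw [← compl_Iio, prob_compl_eq_one_sub measurableSet_Iio, hIio, expMeasure_eq_withDensity,
    withDensity_apply _ measurableSet_Iic, lintegral_exponentialPDF_eq_antiDeriv hr, if_pos hu,
    ← ENNReal.ofReal_one, ← ENNReal.ofReal_sub _ (one_sub_exp_neg_mul_nonneg hr.le hu),
    sub_sub_cancel]

lemma exp_neg_mul_add (a b x : ℝ) : exp (-((a + b) * x)) = exp (-(a * x)) * exp (-(b * x)) := by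
  rw [← exp_add]; ring_nf

lemma lintegral_expMeasure_Ici {lam mu : ℝ} (hlam : 0 < lam) (hmu : 0 < mu) {s : Set ℝ}
    (hs : MeasurableSet s) :
    ∫⁻ u in s, expMeasure lam (Ici u) ∂expMeasure mu
      = ENNReal.ofReal (mu / (lam + mu)) * expMeasure (lam + mu) s := by
  have tilt : ∀ u, exponentialPDF mu u * expMeasure lam (Ici u)
      = ENNReal.ofReal (mu / (lam + mu)) * exponentialPDF (lam + mu) u := by
    intro u
    rcases lt_or_ge u 0 with hu | hu
    · simp only [exponentialPDF_of_neg hu, zero_mul, mul_zero]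
    · rw [expMeasure_Ici hlam hu, exponentialPDF_of_nonneg hu, exponentialPDF_of_nonneg hu,
        ← ENNReal.ofReal_mul (by positivity), ← ENNReal.ofReal_mul (by positivity),
        exp_neg_mul_add]
      congr 1
      field_simp
  have hmeas : Measurable fun u => expMeasure lam (Ici u) :=
    Antitone.measurable fun _ _ h => measure_mono (Ici_subset_Ici.2 h)
  rw [expMeasure_eq_withDensity mu, restrict_withDensity hs,
    lintegral_withDensity_eq_lintegral_mul _ (measurable_exponentialPDF mu) hmeas]
  simp only [Pi.mul_apply, tilt]
  rw [lintegral_const_mul _ (measurable_exponentialPDF _), expMeasure_eq_withDensity,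
    withDensity_apply _ hs]

lemma exponentialPDF_mul_exponentialPDF_sub {lam mu : ℝ} (hlam : 0 < lam) (hmu : 0 < mu)
    (x y : ℝ) :
    exponentialPDF (lam + mu) y * exponentialPDF mu (-y + x)
      = (Iic x).indicator
          (fun y => ENNReal.ofReal ((lam + mu) / lam * mu * exp (-(mu * x))) *
            exponentialPDF lam y) y := by
  rcases lt_or_ge y 0 with hy | hy
  · simp [exponentialPDF_of_neg hy, indicator_apply]
  rcases lt_or_ge x y with hxy | hxy
  · rw [exponentialPDF_of_neg (x := -y + x) (by linarith), mul_zero,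
      indicator_of_notMem (by simpa using hxy)]
  rw [indicator_of_mem (mem_Iic.2 hxy), exponentialPDF_of_nonneg hy, exponentialPDF_of_nonneg hy,
    exponentialPDF_of_nonneg (by linarith), ← ENNReal.ofReal_mul (by positivity),
    ← ENNReal.ofReal_mul (by positivity)]
  have hexp : exp (-((lam + mu) * y)) * exp (-(mu * (-y + x)))
      = exp (-(lam * y)) * exp (-(mu * x)) := by
    rw [← exp_add, ← exp_add]; ring_nf
  congr 1
  rw [mul_mul_mul_comm, hexp]
  field_simp

lemma lconvolution_exponentialPDF {lam mu : ℝ} (hlam : 0 < lam) (hmu : 0 < mu) (x : ℝ) :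
    (exponentialPDF (lam + mu) ⋆ₗ exponentialPDF mu) x
      = ENNReal.ofReal ((lam + mu) / lam * (1 - exp (-(lam * x)))) * exponentialPDF mu x := by
  simp only [lconvolution_def, exponentialPDF_mul_exponentialPDF_sub hlam hmu x]
  rw [lintegral_indicator measurableSet_Iic,
    lintegral_const_mul _ (measurable_exponentialPDF lam),
    lintegral_exponentialPDF_eq_antiDeriv hlam]
  rcases lt_or_ge x 0 with hx | hx
  · rw [if_neg (not_le.2 hx), exponentialPDF_of_neg hx, ENNReal.ofReal_zero, mul_zero, mul_zero]
  have := one_sub_exp_neg_mul_nonneg hlam.le hx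
  rw [if_pos hx, exponentialPDF_of_nonneg hx, ← ENNReal.ofReal_mul (by positivity),
    ← ENNReal.ofReal_mul (by positivity)]
  congr 1
  ring

lemma expMeasure_eq_add_conv {lam mu : ℝ} (hlam : 0 < lam) (hmu : 0 < mu) :
    expMeasure mu = ENNReal.ofReal (mu / (lam + mu)) • expMeasure (lam + mu)
      + ENNReal.ofReal (lam / (lam + mu)) • (expMeasure (lam + mu) ∗ expMeasure mu) := by
  simp only [expMeasure_eq_withDensity]
  rw [conv_withDensity_eq_lconvolution (measurable_exponentialPDF _) (measurable_exponentialPDF _),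
    ← withDensity_smul _ (measurable_exponentialPDF _), ← withDensity_smul _ (by fun_prop),
    ← withDensity_add_left (by fun_prop)]
  congr 1
  funext x
  simp only [Pi.add_apply, Pi.smul_apply, smul_eq_mul, lconvolution_exponentialPDF hlam hmu]
  rcases lt_or_ge x 0 with hx | hx
  · simp [exponentialPDF_of_neg hx]
  have := one_sub_exp_neg_mul_nonneg hlam.le hx
  rw [exponentialPDF_of_nonneg hx, exponentialPDF_of_nonneg hx, ← mul_assoc,
    ← ENNReal.ofReal_mul (by positivity), ← ENNReal.ofReal_mul (by positivity),
    ← ENNReal.ofReal_mul (by positivity), ← ENNReal.ofReal_add (by positivity) (by positivity),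
    exp_neg_mul_add]
  congr 1
  field_simp
  ring

/-- with `τ_0 ~ Exp(λ)` and `σ_0 ~ Exp(μ)` independent, the conditional law of
`σ_0` given `{σ_0 ≤ τ_0}` is `Exp(λ+μ)`, and the conditional law of `σ_0` given `{σ_0 > τ_0}`
is `Exp(λ+μ) ⋆ Exp(μ)`. -/
theorem condLaw_first_service
    {Ω : Type*} [MeasurableSpace Ω] (P : Measure Ω) [IsProbabilityMeasure P]
    (lam mu : ℝ) (hlam : 0 < lam) (hmu : 0 < mu)
    (τ₀ σ₀ : Ω → ℝ) (hτm : Measurable τ₀) (hσm : Measurable σ₀)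
    (hindep : IndepFun τ₀ σ₀ P)
    (hτ : P.map τ₀ = expMeasure lam) (hσ : P.map σ₀ = expMeasure mu) :
    (P[|{ω | σ₀ ω ≤ τ₀ ω}]).map σ₀ = expMeasure (lam + mu) ∧
    (P[|{ω | τ₀ ω < σ₀ ω}]).map σ₀ = (expMeasure (lam + mu)).conv (expMeasure mu) := by
  have := isProbabilityMeasure_expMeasure hmu
  have := isProbabilityMeasure_expMeasure (add_pos hlam hmu)
  have := (expMeasure (lam + mu)).smul_finite (ENNReal.ofReal_ne_top (r := mu / (lam + mu)))
  have hA : MeasurableSet {ω | σ₀ ω ≤ τ₀ ω} := measurableSet_le hσm hτm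
  have hcompl : {ω | τ₀ ω < σ₀ ω} = {ω | σ₀ ω ≤ τ₀ ω}ᶜ := by ext; simp
  have hshort : ∀ s, MeasurableSet s → P ({ω | σ₀ ω ≤ τ₀ ω} ∩ σ₀ ⁻¹' s)
      = ENNReal.ofReal (mu / (lam + mu)) * expMeasure (lam + mu) s := fun s hs => by
    rw [hindep.symm.measure_inter_preimage_le hσm hτm hs, hσ, hτ,
      lintegral_expMeasure_Ici hlam hmu hs]
  have hlong : ∀ s, MeasurableSet s → P ({ω | τ₀ ω < σ₀ ω} ∩ σ₀ ⁻¹' s)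
      = ENNReal.ofReal (lam / (lam + mu)) * (expMeasure (lam + mu) ∗ expMeasure mu) s :=
    fun s hs => by
      rw [hcompl, measure_compl_inter_preimage_of_map_eq_add hA hσm
        (hσ.trans (expMeasure_eq_add_conv hlam hmu)) (by simpa using hshort) hs,
        Measure.smul_apply, smul_eq_mul]
  exact ⟨cond_map_eq_of_measure_inter_preimage hA hσm (by positivity) ENNReal.ofReal_ne_top
      hshort,
    cond_map_eq_of_measure_inter_preimage (hcompl ▸ hA.compl) hσm (by positivity)
      ENNReal.ofReal_ne_top hlong⟩
end

section
/- For every integer n ≥ 1 and all real numbers y_0,…,y_{n−1} ≥ 0, P_n(y_0,…,y_{n−1}) = ∫_{y_1}^{y_0+y_1} P_{n−1}(y, y_2,…,y_{n−1}) dy (for n = 1 the integrand is P_0 = 1 and y_1 may be taken to be 0, giving P_1(y_0) = y_0). -/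
/-!
A Dyck path of length `2n` is determined by its sequence `α = (α_0, …, α_{n-1})`: it is the path
`U^{α_0} D U^{α_1} D ⋯ U^{α_{n-1}} D`, and the sequences that occur are exactly those with
`α_0 + ⋯ + α_{k-1} ≥ k` for `k ≤ n` and total `n`. Both directions are read off the time
`α_0 + ⋯ + α_{j-1} + j` at which the path completes its `j`-th down-step.

Merging the first two parts, `(a_0, a_1, a_2, …) ↦ (a_0 + a_1 - 1, a_2, …)`, maps the sequences of
length `n + 1` onto those of length `n`; the fibre over `b` consists of the splittings of
`b_0 + 1` into parts `k ∈ [1, b_0 + 1]` and `b_0 + 1 - k`. Along a fibre only the factor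
`t^{b_0}/b_0!` of the weight of `b` in `P_n(t, y_2, …)` changes, into
`y_0^k/k! · y_1^{b_0+1-k}/(b_0+1-k)!`, and by the binomial theorem
`∑_{k=1}^{m+1} y_0^k/k! · y_1^{m+1-k}/(m+1-k)! = ((y_0+y_1)^{m+1} - y_1^{m+1})/(m+1)!
  = ∫_{y_1}^{y_0+y_1} t^m/m! dt`.
-/

/-- A path of length `2n` is encoded by `w : Fin (2*n) → Bool`, where `true` stands for a step
`(1,1)` and `false` for a step `(1,-1)`. `upCount n w m` is the number of up-steps among the
first `m` steps; the height of the path after `m` steps is `2 * upCount n w m - m`. -/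
def upCount (n : ℕ) (w : Fin (2 * n) → Bool) (m : ℕ) : ℕ :=
  (Finset.univ.filter (fun p : Fin (2 * n) => (p : ℕ) < m ∧ w p = true)).card

/-- `w` encodes a Dyck path of length `2n`: starts at `(0,0)`, ends at `(2n,0)`, stays weakly
above the x-axis. -/
def IsDyckPath (n : ℕ) (w : Fin (2 * n) → Bool) : Prop :=
  (∀ m ≤ 2 * n, m ≤ 2 * upCount n w m) ∧ upCount n w (2 * n) = n

open Classical in
/-- The finite set `𝒟_n` of Dyck paths of length `2n`. -/
noncomputable def dyckPaths (n : ℕ) : Finset (Fin (2 * n) → Bool) :=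
  Finset.univ.filter (fun w => IsDyckPath n w)

/-- `alpha n w j + 1` is the number of lattice points common to the path `w` and the line
`y = x - 2j`, i.e. the number of `m ∈ {0, …, 2n}` with height `2 * upCount n w m - m = m - 2j`,
equivalently `upCount n w m + j = m`. -/
def alpha (n : ℕ) (w : Fin (2 * n) → Bool) (j : ℕ) : ℕ :=
  ((Finset.range (2 * n + 1)).filter (fun m => upCount n w m + j = m)).card - 1

/-- The Dyck polynomial `P_n(y_0, …, y_{n-1}) = Σ_{π ∈ 𝒟_n} Π_{i=0}^{n-1} y_i^{α_i(π)}/α_i(π)!`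
(the argument `y : ℕ → ℝ` is only used through its first `n` values; `P_0 = 1`). -/
noncomputable def Ppoly (n : ℕ) (y : ℕ → ℝ) : ℝ :=
  ∑ w ∈ dyckPaths n, ∏ i ∈ Finset.range n, y i ^ alpha n w i / (alpha n w i).factorial

/-- The Dyck polynomial `R_n(y_0, …, y_{n-1}) = Σ_{π ∈ 𝒟_n} Π_{i=0}^{n-1} y_i^{α_i(π)}`. -/
noncomputable def Rpoly (n : ℕ) (y : ℕ → ℝ) : ℝ :=
  ∑ w ∈ dyckPaths n, ∏ i ∈ Finset.range n, y i ^ alpha n w i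

/-- The one-variable Dyck polynomial `𝓡_n^{(i)}(z) = Σ_{π ∈ 𝒟_n} z^{α_i(π)+1}`. -/
noncomputable def calR (n i : ℕ) (z : ℝ) : ℝ :=
  ∑ w ∈ dyckPaths n, z ^ (alpha n w i + 1)


open Finset

def dnCount (n : ℕ) (w : Fin (2 * n) → Bool) (m : ℕ) : ℕ :=
  (Finset.univ.filter (fun p : Fin (2 * n) => (p : ℕ) < m ∧ w p = false)).card

lemma card_filter_val_lt_succ {N : ℕ} (P : Fin N → Prop) [DecidablePred P] {m : ℕ}
    (hm : m < N) :
    #{p : Fin N | (p : ℕ) < m + 1 ∧ P p} = #{p : Fin N | (p : ℕ) < m ∧ P p} +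
      if P ⟨m, hm⟩ then 1 else 0 := by
  split_ifs with h
  · rw [← card_insert_of_notMem (s := {p : Fin N | (p : ℕ) < m ∧ P p}) (a := ⟨m, hm⟩) (by simp)]
    congr 1
    ext p
    simp only [mem_filter, mem_univ, true_and, mem_insert, Fin.ext_iff]
    grind
  · rw [add_zero]
    congr 1
    ext p
    simp only [mem_filter, mem_univ, true_and]
    grind

section StepCounts

variable {n : ℕ} (w : Fin (2 * n) → Bool)

lemma upCount_zero : upCount n w 0 = 0 := by
  simp [upCount]

lemma dnCount_zero : dnCount n w 0 = 0 := by
  simp [dnCount]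

lemma upCount_succ {m : ℕ} (hm : m < 2 * n) :
    upCount n w (m + 1) = upCount n w m + if w ⟨m, hm⟩ = true then 1 else 0 :=
  card_filter_val_lt_succ (fun p => w p = true) hm

lemma dnCount_succ {m : ℕ} (hm : m < 2 * n) :
    dnCount n w (m + 1) = dnCount n w m + if w ⟨m, hm⟩ = false then 1 else 0 :=
  card_filter_val_lt_succ (fun p => w p = false) hm

lemma upCount_add_dnCount {m : ℕ} (hm : m ≤ 2 * n) : upCount n w m + dnCount n w m = m := by
  induction m with
  | zero => rw [upCount_zero, dnCount_zero]
  | succ m ih =>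
    rw [upCount_succ w hm, dnCount_succ w hm]
    have := ih (by omega)
    cases w ⟨m, hm⟩ <;> simp <;> omega

lemma dnCount_mono : Monotone (dnCount n w) := fun _ _ h =>
  card_le_card fun _ => by simpa using fun hp hw => ⟨hp.trans_le h, hw⟩

lemma dnCount_le_dnCount_two_mul (m : ℕ) : dnCount n w m ≤ dnCount n w (2 * n) :=
  card_le_card fun p => by simp

lemma dnCount_succ_le {m : ℕ} (hm : m < 2 * n) : dnCount n w (m + 1) ≤ dnCount n w m + 1 := by
  rw [dnCount_succ w hm]
  split <;> omega

lemma alpha_eq_card_dnCount (j : ℕ) :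
    alpha n w j = #{m ∈ range (2 * n + 1) | dnCount n w m = j} - 1 := by
  unfold alpha
  congr 2
  refine filter_congr fun m hm => ?_
  have := upCount_add_dnCount w (m := m) (by simp at hm; omega)
  omega

end StepCounts

def psum (a : ℕ → ℕ) (k : ℕ) : ℕ := ∑ i ∈ range k, a i

lemma psum_succ (a : ℕ → ℕ) (k : ℕ) : psum a (k + 1) = psum a k + a k :=
  sum_range_succ a k

lemma psum_mono (a : ℕ → ℕ) : Monotone (psum a) := fun _ _ h =>
  sum_le_sum_of_subset (range_subset_range.2 h)

/-- The sequences `alpha n w` of the Dyck paths `w` of length `2n` (`mem_dyckComps`). -/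
def IsDyckComp (n : ℕ) (a : ℕ → ℕ) : Prop :=
  (∀ i, n ≤ i → a i = 0) ∧ (∀ k ≤ n, k ≤ psum a k) ∧ psum a n = n

/-- `downTime n w j` is the time at which the path `w` completes its `j`-th down-step,
for `1 ≤ j ≤ dnCount n w (2 * n)`. -/
def downTime (n : ℕ) (w : Fin (2 * n) → Bool) (j : ℕ) : ℕ :=
  #{m ∈ range (2 * n + 1) | dnCount n w m < j}

section DownTime

variable {n : ℕ} (w : Fin (2 * n) → Bool)

lemma dnCount_lt_iff_lt_downTime {m j : ℕ} (hm : m ≤ 2 * n) :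
    dnCount n w m < j ↔ m < downTime n w j := by
  constructor
  · intro h
    have : range (m + 1) ⊆ {m' ∈ range (2 * n + 1) | dnCount n w m' < j} := fun m' hm' => by
      simp only [mem_range, mem_filter] at hm' ⊢
      exact ⟨by omega, (dnCount_mono w (by omega)).trans_lt h⟩
    simpa [downTime] using card_le_card this
  · intro h
    by_contra! h'
    have : {m' ∈ range (2 * n + 1) | dnCount n w m' < j} ⊆ range m := fun m' hm' => by
      simp only [mem_range, mem_filter] at hm' ⊢
      by_contra! hle
      exact absurd (h'.trans (dnCount_mono w hle)) (not_le.2 hm'.2)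
    simpa [downTime] using (card_le_card this).trans_lt' h

lemma downTime_zero : downTime n w 0 = 0 := by
  simp [downTime]

lemma downTime_le_two_mul {j : ℕ} (hj : j ≤ dnCount n w (2 * n)) : downTime n w j ≤ 2 * n := by
  by_contra! h
  exact absurd ((dnCount_lt_iff_lt_downTime w le_rfl).2 h) (by omega)

lemma downTime_of_dnCount_two_mul_lt {j : ℕ} (hj : dnCount n w (2 * n) < j) :
    downTime n w j = 2 * n + 1 := by
  rw [downTime, filter_true_of_mem fun m _ => (dnCount_le_dnCount_two_mul w m).trans_lt hj,
    card_range]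

lemma dnCount_downTime {j : ℕ} (hj : j ≤ dnCount n w (2 * n)) :
    dnCount n w (downTime n w j) = j := by
  have hT := downTime_le_two_mul w hj
  have hge : j ≤ dnCount n w (downTime n w j) :=
    not_lt.1 fun h => lt_irrefl _ ((dnCount_lt_iff_lt_downTime w hT).1 h)
  rcases Nat.eq_zero_or_pos (downTime n w j) with h0 | hpos
  · rw [h0, dnCount_zero] at hge ⊢
    omega
  · have hprev : dnCount n w (downTime n w j - 1) < j :=
      (dnCount_lt_iff_lt_downTime w (by omega)).2 (by omega)
    have := dnCount_succ_le w (m := downTime n w j - 1) (by omega)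
    rw [Nat.sub_add_cancel hpos] at this
    omega

lemma card_filter_dnCount_eq (j : ℕ) :
    #{m ∈ range (2 * n + 1) | dnCount n w m = j} = downTime n w (j + 1) - downTime n w j := by
  rw [downTime, downTime, ← card_sdiff_of_subset (monotone_filter_right _ fun _ _ h => by omega)]
  congr 1
  ext m
  simp only [mem_filter, mem_sdiff]
  grind

lemma alpha_eq_downTime_sub (j : ℕ) :
    alpha n w j = downTime n w (j + 1) - downTime n w j - 1 := by
  rw [alpha_eq_card_dnCount, card_filter_dnCount_eq]

lemma psum_alpha_add_eq_downTime {j : ℕ} (hj : j ≤ dnCount n w (2 * n)) :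
    psum (alpha n w) j + j = downTime n w j := by
  induction j with
  | zero => simp [psum, downTime_zero]
  | succ j ih =>
    have hlt : downTime n w j < downTime n w (j + 1) :=
      (dnCount_lt_iff_lt_downTime w (downTime_le_two_mul w (by omega))).1
        (by rw [dnCount_downTime w (by omega)]; omega)
    rw [psum_succ, alpha_eq_downTime_sub, ← ih (by omega)] at *
    omega

end DownTime

lemma card_filter_lt_lt_iff_of_strictMono {f : ℕ → ℕ} (hf : StrictMono f) {n j : ℕ} (hj : j ≤ n)
    (m : ℕ) :
    #{k ∈ range n | f k < m} < j ↔ ∃ k < j, m ≤ f k := by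
  constructor
  · intro h
    by_contra! h'
    have : range j ⊆ {k ∈ range n | f k < m} := fun k hk => by
      simp only [mem_range, mem_filter] at hk ⊢
      exact ⟨by omega, h' k hk⟩
    simpa using (card_le_card this).trans_lt h
  · rintro ⟨k, hk, hmk⟩
    have : {k ∈ range n | f k < m} ⊆ range k := fun k' hk' => by
      simp only [mem_range, mem_filter] at hk' ⊢
      by_contra! hle
      exact absurd (hmk.trans (hf.monotone hle)) (not_le.2 hk'.2)
    have := card_le_card this
    rw [card_range] at this
    omega

def downPos (a : ℕ → ℕ) (k : ℕ) : ℕ := psum a (k + 1) + k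

/-- The path `U^{a 0} D U^{a 1} D ⋯ U^{a (n-1)} D`. -/
def pathOfComp (n : ℕ) (a : ℕ → ℕ) : Fin (2 * n) → Bool :=
  fun p => decide (∀ k < n, (p : ℕ) ≠ downPos a k)

lemma downPos_strictMono (a : ℕ → ℕ) : StrictMono (downPos a) :=
  strictMono_nat_of_lt_succ fun k => by
    have := psum_mono a (show k + 1 ≤ k + 1 + 1 by omega)
    unfold downPos
    omega

lemma pathOfComp_eq_false_iff {n : ℕ} {a : ℕ → ℕ} {p : Fin (2 * n)} :
    pathOfComp n a p = false ↔ ∃ k < n, (p : ℕ) = downPos a k := by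
  simp [pathOfComp]

lemma dnCount_pathOfComp (n : ℕ) (a : ℕ → ℕ) {m : ℕ} (hm : m ≤ 2 * n) :
    dnCount n (pathOfComp n a) m = #{k ∈ range n | downPos a k < m} := by
  symm
  refine card_bij (fun k hk => ⟨downPos a k, by simp at hk; omega⟩) (fun k hk => ?_)
    (fun k _ k' _ h => (downPos_strictMono a).injective (Fin.mk.inj h)) (fun p hp => ?_)
  · simp only [mem_filter, mem_range] at hk
    simpa [pathOfComp_eq_false_iff] using ⟨hk.2, k, hk.1, rfl⟩
  · simp only [mem_filter, mem_univ, true_and, pathOfComp_eq_false_iff] at hp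
    obtain ⟨hpm, k, hk, hp⟩ := hp
    exact ⟨k, by simpa [← hp] using ⟨hk, hpm⟩, Fin.ext hp.symm⟩

lemma dnCount_pathOfComp_lt_iff {n : ℕ} {a : ℕ → ℕ} {j m : ℕ} (hj : j ≤ n) (hm : m ≤ 2 * n) :
    dnCount n (pathOfComp n a) m < j ↔ m < psum a j + j := by
  rw [dnCount_pathOfComp n a hm,
    card_filter_lt_lt_iff_of_strictMono (downPos_strictMono a) hj]
  constructor
  · rintro ⟨k, hk, hmk⟩
    have := psum_mono a (show k + 1 ≤ j by omega)
    unfold downPos at hmk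
    omega
  · intro h
    rcases Nat.eq_zero_or_pos j with rfl | hj0
    · simp [psum] at h
    · refine ⟨j - 1, by omega, ?_⟩
      unfold downPos
      rw [Nat.sub_add_cancel hj0]
      omega

section PathOfComp

variable {n : ℕ} {a : ℕ → ℕ} (ha : IsDyckComp n a)
include ha

lemma IsDyckComp.psum_le (k : ℕ) : psum a k ≤ n := by
  rcases le_or_gt k n with hk | hk
  · exact ha.2.2 ▸ psum_mono a hk
  · rw [← ha.2.2, psum, psum, ← sum_range_add_sum_Ico _ hk.le,
      sum_eq_zero fun i hi => ha.1 i (mem_Ico.1 hi).1, add_zero]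

lemma dnCount_pathOfComp_two_mul : dnCount n (pathOfComp n a) (2 * n) = n := by
  rw [dnCount_pathOfComp n a le_rfl, filter_true_of_mem, card_range]
  intro k hk
  have := ha.psum_le (k + 1)
  simp only [mem_range] at hk
  unfold downPos
  omega

lemma isDyckPath_pathOfComp : IsDyckPath n (pathOfComp n a) := by
  refine ⟨fun m hm => ?_, ?_⟩
  · set j := dnCount n (pathOfComp n a) m
    have hjn : j ≤ n := dnCount_pathOfComp_two_mul ha ▸ dnCount_le_dnCount_two_mul _ m
    have h1 := (dnCount_pathOfComp_lt_iff hjn hm).not.1 (lt_irrefl j)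
    have := ha.2.1 j hjn
    have := upCount_add_dnCount (pathOfComp n a) hm
    omega
  · have := upCount_add_dnCount (pathOfComp n a) (le_refl (2 * n))
    rw [dnCount_pathOfComp_two_mul ha] at this
    omega

lemma downTime_pathOfComp {j : ℕ} (hj : j ≤ n) :
    downTime n (pathOfComp n a) j = psum a j + j := by
  have : {m ∈ range (2 * n + 1) | dnCount n (pathOfComp n a) m < j} = range (psum a j + j) := by
    ext m
    simp only [mem_filter, mem_range]
    constructor
    · rintro ⟨hm, h⟩
      exact (dnCount_pathOfComp_lt_iff hj (by omega)).1 h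
    · intro h
      have := ha.psum_le j
      exact ⟨by omega, (dnCount_pathOfComp_lt_iff hj (by omega)).2 h⟩
  rw [downTime, this, card_range]

lemma alpha_pathOfComp : alpha n (pathOfComp n a) = a := by
  funext j
  have htop := dnCount_pathOfComp_two_mul ha
  rw [alpha_eq_downTime_sub]
  rcases lt_trichotomy j n with hj | rfl | hj
  · rw [downTime_pathOfComp ha hj.le, downTime_pathOfComp ha hj, psum_succ]
    omega
  · rw [downTime_pathOfComp ha le_rfl, downTime_of_dnCount_two_mul_lt _ (by omega), ha.2.2,
      ha.1 j le_rfl]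
    omega
  · rw [downTime_of_dnCount_two_mul_lt _ (by omega), downTime_of_dnCount_two_mul_lt _ (by omega),
      ha.1 j hj.le]
    omega

end PathOfComp

lemma eq_of_dnCount_eq {n : ℕ} {w v : Fin (2 * n) → Bool}
    (h : ∀ m ≤ 2 * n, dnCount n w m = dnCount n v m) : w = v := by
  funext p
  have hstep := h (p + 1) p.isLt
  rw [dnCount_succ w p.isLt, dnCount_succ v p.isLt, h p p.isLt.le] at hstep
  cases hw : w p <;> cases hv : v p <;> simp_all

section Dyck

variable {n : ℕ} {w : Fin (2 * n) → Bool} (hw : IsDyckPath n w)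
include hw

lemma IsDyckPath.two_mul_dnCount_le {m : ℕ} (hm : m ≤ 2 * n) : 2 * dnCount n w m ≤ m := by
  have := hw.1 m hm
  have := upCount_add_dnCount w hm
  omega

lemma IsDyckPath.dnCount_two_mul : dnCount n w (2 * n) = n := by
  have := hw.2
  have := upCount_add_dnCount w (le_refl (2 * n))
  omega

lemma IsDyckPath.two_mul_le_downTime {j : ℕ} (hj : j ≤ n) : 2 * j ≤ downTime n w j := by
  have hj' : j ≤ dnCount n w (2 * n) := hj.trans_eq hw.dnCount_two_mul.symm
  have := hw.two_mul_dnCount_le (downTime_le_two_mul w hj')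
  rwa [dnCount_downTime w hj'] at this

lemma isDyckComp_alpha : IsDyckComp n (alpha n w) := by
  have htop := hw.dnCount_two_mul
  have hTn : downTime n w n = 2 * n :=
    le_antisymm (downTime_le_two_mul w htop.ge) (hw.two_mul_le_downTime le_rfl)
  refine ⟨fun i hi => ?_, fun k hk => ?_, ?_⟩
  · rw [alpha_eq_downTime_sub, downTime_of_dnCount_two_mul_lt w (by omega)]
    rcases hi.eq_or_lt with rfl | hi
    · omega
    · rw [downTime_of_dnCount_two_mul_lt w (by omega)]
      omega
  · have := psum_alpha_add_eq_downTime w (hk.trans_eq htop.symm)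
    have := hw.two_mul_le_downTime hk
    omega
  · have := psum_alpha_add_eq_downTime w htop.ge
    omega

lemma pathOfComp_alpha : pathOfComp n (alpha n w) = w := by
  have ha := isDyckComp_alpha hw
  refine (eq_of_dnCount_eq fun m hm => ?_).symm
  have key : ∀ j ≤ n, dnCount n w m < j ↔ dnCount n (pathOfComp n (alpha n w)) m < j :=
    fun j hj => by
      rw [dnCount_pathOfComp_lt_iff hj hm, dnCount_lt_iff_lt_downTime w hm,
        ← psum_alpha_add_eq_downTime w (hj.trans_eq hw.dnCount_two_mul.symm)]
  have h1 := dnCount_le_dnCount_two_mul w m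
  have h2 := dnCount_le_dnCount_two_mul (pathOfComp n (alpha n w)) m
  rw [hw.dnCount_two_mul] at h1
  rw [dnCount_pathOfComp_two_mul ha] at h2
  have := key _ h1
  have := key _ h2
  omega

end Dyck

lemma mem_dyckPaths {n : ℕ} {w : Fin (2 * n) → Bool} : w ∈ dyckPaths n ↔ IsDyckPath n w := by
  simp [dyckPaths]

open Classical in
noncomputable def dyckComps (n : ℕ) : Finset (ℕ → ℕ) := (dyckPaths n).image (alpha n)

lemma mem_dyckComps {n : ℕ} {a : ℕ → ℕ} : a ∈ dyckComps n ↔ IsDyckComp n a := by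
  simp only [dyckComps, mem_image, mem_dyckPaths]
  constructor
  · rintro ⟨w, hw, rfl⟩
    exact isDyckComp_alpha hw
  · exact fun ha => ⟨pathOfComp n a, isDyckPath_pathOfComp ha, alpha_pathOfComp ha⟩

open Classical in
lemma sum_dyckPaths_alpha {M : Type*} [AddCommMonoid M] (n : ℕ) (f : (ℕ → ℕ) → M) :
    ∑ w ∈ dyckPaths n, f (alpha n w) = ∑ a ∈ dyckComps n, f a := by
  refine (sum_image fun w hw v hv h => ?_).symm
  rw [← pathOfComp_alpha (mem_dyckPaths.1 hw), ← pathOfComp_alpha (mem_dyckPaths.1 hv), h]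

def mergeFirst (a : ℕ → ℕ) : ℕ → ℕ
  | 0 => a 0 + a 1 - 1
  | i + 1 => a (i + 2)

def splitFirst (k : ℕ) (b : ℕ → ℕ) : ℕ → ℕ
  | 0 => k
  | 1 => b 0 + 1 - k
  | i + 2 => b (i + 1)

lemma psum_mergeFirst {a : ℕ → ℕ} (ha : 1 ≤ a 0) (k : ℕ) :
    psum (mergeFirst a) (k + 1) + 1 = psum a (k + 2) := by
  simp only [psum, sum_range_succ', mergeFirst, zero_add, add_assoc, Nat.reduceAdd]
  omega

lemma psum_splitFirst {k : ℕ} {b : ℕ → ℕ} (hk : k ≤ b 0 + 1) (j : ℕ) :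
    psum (splitFirst k b) (j + 2) = psum b (j + 1) + 1 := by
  simp only [psum, sum_range_succ', splitFirst, add_assoc]
  omega

lemma splitFirst_mergeFirst {a : ℕ → ℕ} (ha : 1 ≤ a 0) : splitFirst (a 0) (mergeFirst a) = a := by
  funext i
  rcases i with _ | _ | i
  · rfl
  · show a 0 + a 1 - 1 + 1 - a 0 = a 1
    omega
  · rfl

lemma mergeFirst_splitFirst {k : ℕ} {b : ℕ → ℕ} (hk1 : 1 ≤ k) (hk2 : k ≤ b 0 + 1) :
    mergeFirst (splitFirst k b) = b := by
  funext i
  rcases i with _ | i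
  · show k + (b 0 + 1 - k) - 1 = b 0
    omega
  · rfl

lemma IsDyckComp.one_le_apply_zero {n : ℕ} {a : ℕ → ℕ} (ha : IsDyckComp (n + 1) a) : 1 ≤ a 0 := by
  simpa [psum] using ha.2.1 1 (by omega)

lemma isDyckComp_mergeFirst {n : ℕ} {a : ℕ → ℕ} (ha : IsDyckComp (n + 1) a) :
    IsDyckComp n (mergeFirst a) := by
  have h0 := ha.one_le_apply_zero
  refine ⟨fun i hi => ?_, fun k hk => ?_, ?_⟩
  · rcases i with _ | i
    · have h1 : psum a 1 = 1 := by simpa [show n = 0 by omega] using ha.2.2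
      have h2 := ha.1 1 (by omega)
      simp only [psum, sum_range_one] at h1
      show a 0 + a 1 - 1 = 0
      omega
    · exact ha.1 (i + 2) (by omega)
  · rcases k with _ | k
    · exact Nat.zero_le _
    · have := psum_mergeFirst h0 k
      have := ha.2.1 (k + 2) (by omega)
      omega
  · rcases n with _ | n
    · rfl
    · have := psum_mergeFirst h0 n
      have : psum a (n + 2) = n + 2 := ha.2.2
      omega

lemma isDyckComp_splitFirst {n k : ℕ} {b : ℕ → ℕ} (hb : IsDyckComp n b) (hk1 : 1 ≤ k)
    (hk2 : k ≤ b 0 + 1) : IsDyckComp (n + 1) (splitFirst k b) := by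
  have hsplit1 : psum (splitFirst k b) 1 = k := by simp [psum, splitFirst]
  refine ⟨fun i hi => ?_, fun j hj => ?_, ?_⟩
  · rcases i with _ | _ | i
    · omega
    · have := hb.1 0 (by omega)
      show b 0 + 1 - k = 0
      omega
    · exact hb.1 (i + 1) (by omega)
  · rcases j with _ | _ | j
    · exact Nat.zero_le _
    · exact hsplit1 ▸ hk1
    · have : psum (splitFirst k b) (j + 1 + 1) = psum b (j + 1) + 1 := psum_splitFirst hk2 j
      have := hb.2.1 (j + 1) (by omega)
      omega
  · rcases n with _ | n
    · have := hb.1 0 le_rfl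
      show psum (splitFirst k b) 1 = 1
      omega
    · have : psum (splitFirst k b) (n + 1 + 1) = psum b (n + 1) + 1 := psum_splitFirst hk2 n
      have := hb.2.2
      omega

lemma sum_dyckComps_succ {M : Type*} [AddCommMonoid M] (n : ℕ) (f : (ℕ → ℕ) → M) :
    ∑ a ∈ dyckComps (n + 1), f a =
      ∑ b ∈ dyckComps n, ∑ k ∈ Icc 1 (b 0 + 1), f (splitFirst k b) := by
  rw [sum_sigma']
  refine sum_nbij' (fun a => ⟨mergeFirst a, a 0⟩) (fun q => splitFirst q.2 q.1)
    (fun a ha => ?_) (fun ⟨b, k⟩ hq => ?_) (fun a ha => ?_) (fun ⟨b, k⟩ hq => ?_) (fun a ha => ?_)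
  all_goals simp only [mem_sigma, mem_Icc, mem_dyckComps] at *
  · exact ⟨isDyckComp_mergeFirst ha, ha.one_le_apply_zero, by show a 0 ≤ a 0 + a 1 - 1 + 1; omega⟩
  · exact isDyckComp_splitFirst hq.1 hq.2.1 hq.2.2
  · exact splitFirst_mergeFirst ha.one_le_apply_zero
  · rw [mergeFirst_splitFirst hq.2.1 hq.2.2]
    rfl
  · rw [splitFirst_mergeFirst ha.one_le_apply_zero]

lemma add_pow_div_factorial (u v : ℝ) (N : ℕ) :
    (u + v) ^ N / N.factorial =
      ∑ k ∈ range (N + 1), u ^ k / k.factorial * (v ^ (N - k) / (N - k).factorial) := by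
  rw [add_pow, sum_div]
  refine sum_congr rfl fun k hk => ?_
  rw [Nat.cast_choose ℝ (Nat.lt_succ_iff.1 (mem_range.1 hk))]
  field_simp

lemma integral_pow_div_factorial (u v : ℝ) (m : ℕ) :
    ∫ t in v..u + v, t ^ m / m.factorial =
      ∑ k ∈ Icc 1 (m + 1), u ^ k / k.factorial * (v ^ (m + 1 - k) / (m + 1 - k).factorial) := by
  have hfac : ((m + 1).factorial : ℝ) = (m + 1) * m.factorial := by
    push_cast [Nat.factorial_succ]; ring
  rw [intervalIntegral.integral_div, integral_pow, div_div, ← hfac, sub_div,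
    add_pow_div_factorial, range_eq_Ico, sum_eq_sum_Ico_succ_bot (by omega),
    Ico_add_one_right_eq_Icc]
  simp

noncomputable def dyckWeight (n : ℕ) (y : ℕ → ℝ) (a : ℕ → ℕ) : ℝ :=
  ∏ i ∈ range n, y i ^ a i / (a i).factorial

lemma dyckWeight_eq_of_le {n M : ℕ} (y : ℕ → ℝ) {a : ℕ → ℕ} (ha : ∀ i, n ≤ i → a i = 0)
    (h : n ≤ M) : dyckWeight n y a = dyckWeight M y a := by
  rw [dyckWeight, dyckWeight, ← prod_range_mul_prod_Ico _ h,
    prod_eq_one (s := Ico n M) fun i hi => by simp [ha i (mem_Ico.1 hi).1], mul_one]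

lemma dyckWeight_succ (n : ℕ) (y : ℕ → ℝ) (a : ℕ → ℕ) :
    dyckWeight (n + 1) y a =
      dyckWeight n (fun i => y (i + 1)) (fun i => a (i + 1)) * (y 0 ^ a 0 / (a 0).factorial) :=
  prod_range_succ' _ _

lemma continuous_dyckWeight_ite_zero (n : ℕ) (y : ℕ → ℝ) (a : ℕ → ℕ) :
    Continuous fun t => dyckWeight n (fun i => if i = 0 then t else y i) a :=
  continuous_finsetProd _ fun i _ => by dsimp only; split_ifs <;> fun_prop

lemma sum_dyckWeight_splitFirst {n : ℕ} {b : ℕ → ℕ} (hb : IsDyckComp n b) (y : ℕ → ℝ) :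
    ∑ k ∈ Icc 1 (b 0 + 1), dyckWeight (n + 1) y (splitFirst k b) =
      ∫ t in y 1..y 0 + y 1, dyckWeight n (fun i => if i = 0 then t else y (i + 1)) b := by
  set tail := dyckWeight n (fun i => y (i + 2)) (fun i => b (i + 1))
  have hsplit : ∀ k ∈ Icc 1 (b 0 + 1), dyckWeight (n + 1) y (splitFirst k b) =
      y 0 ^ k / k.factorial * (y 1 ^ (b 0 + 1 - k) / (b 0 + 1 - k).factorial) * tail := by
    intro k hk
    rw [mem_Icc] at hk
    rw [dyckWeight_eq_of_le y (isDyckComp_splitFirst hb hk.1 hk.2).1 (Nat.le_succ _),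
      dyckWeight_succ, dyckWeight_succ]
    simp only [splitFirst, tail]
    ring
  have hint : ∀ t, dyckWeight n (fun i => if i = 0 then t else y (i + 1)) b =
      t ^ b 0 / (b 0).factorial * tail := by
    intro t
    rw [dyckWeight_eq_of_le _ hb.1 (Nat.le_succ _), dyckWeight_succ]
    simp only [tail, if_pos, Nat.add_one_ne_zero, if_false]
    ring
  simp only [sum_congr rfl hsplit, hint, intervalIntegral.integral_mul_const,
    integral_pow_div_factorial, sum_mul]

theorem Ppoly_integral_recursion_general (n : ℕ) (hn : 1 ≤ n) (y : ℕ → ℝ) :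
    Ppoly n y
      = ∫ t in (y 1)..(y 0 + y 1), Ppoly (n - 1) (fun i => if i = 0 then t else y (i + 1)) := by
  obtain ⟨N, rfl⟩ : ∃ N, n = N + 1 := ⟨n - 1, by omega⟩
  calc Ppoly (N + 1) y = ∑ a ∈ dyckComps (N + 1), dyckWeight (N + 1) y a :=
        sum_dyckPaths_alpha (N + 1) (dyckWeight (N + 1) y)
    _ = ∑ b ∈ dyckComps N, ∑ k ∈ Icc 1 (b 0 + 1), dyckWeight (N + 1) y (splitFirst k b) :=
        sum_dyckComps_succ N _
    _ = ∑ b ∈ dyckComps N,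
          ∫ t in y 1..y 0 + y 1, dyckWeight N (fun i => if i = 0 then t else y (i + 1)) b :=
        sum_congr rfl fun b hb => sum_dyckWeight_splitFirst (mem_dyckComps.1 hb) y
    _ = ∑ w ∈ dyckPaths N,
          ∫ t in y 1..y 0 + y 1,
            dyckWeight N (fun i => if i = 0 then t else y (i + 1)) (alpha N w) :=
        (sum_dyckPaths_alpha N _).symm
    _ = _ := (intervalIntegral.integral_finsetSum fun _ _ =>
        (continuous_dyckWeight_ite_zero N _ _).intervalIntegrable _ _).symm

/-- equation (14) of the paper: for `n ≥ 1` and `y_0, …, y_{n-1} ≥ 0`,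
`P_n(y_0,…,y_{n-1}) = ∫_{y_1}^{y_0+y_1} P_{n-1}(y, y_2, …, y_{n-1}) dy`
(for `n = 1` the integrand is `P_0 = 1`, giving `P_1(y_0) = y_0`). -/
theorem Ppoly_integral_recursion (n : ℕ) (hn : 1 ≤ n) (y : ℕ → ℝ) (hy : ∀ i < n, 0 ≤ y i) :
    Ppoly n y
      = ∫ t in (y 1)..(y 0 + y 1), Ppoly (n - 1) (fun i => if i = 0 then t else y (i + 1)) :=
  Ppoly_integral_recursion_general n hn y
end
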